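/- In Example 1 (Ω={0,1}, uniform prior, u_R(SQ,·)=0, u_R(New,0)=1, u_R(New,1)=-1/2, u_S(SQ)=1, u_S(New)=0), the payoffs from Bayesian persuasion are NOT Pareto improvable: for every optimal probabilistic information structure π* with induced sender-preferred optimal contingent plan f*, there is no kernel π' (with the same support) such that V_R(π',f*) ≥ V_R(π*,f*) and V_S(π',f*) > V_S(π*,f*). -/
import Mathlib


open Finset

/-- A probabilistic information structure (stochastic kernel): for each state `ω`,
`π ω` is a probability distribution over messages. -/
def IsKernel {Ω M : Type*} [Fintype M] (π : Ω → M → ℝ) : Prop :=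
  (∀ ω m, 0 ≤ π ω m) ∧ ∀ ω, ∑ m, π ω m = 1

/-- A contingent plan: for each message `m`, `f m` is a probability distribution
over actions. -/
def IsPlan {M A : Type*} [Fintype A] (f : M → A → ℝ) : Prop :=
  (∀ m a, 0 ≤ f m a) ∧ ∀ m, ∑ a, f m a = 1

/-- Ex-ante expected payoff `V u (π, f) = Σ_{m,a,ω} f(m)(a) u(a,ω) π(m|ω) p₀(ω)`. -/
def V {Ω M A : Type*} [Fintype Ω] [Fintype M] [Fintype A]
    (p₀ : Ω → ℝ) (u : A → Ω → ℝ) (π : Ω → M → ℝ) (f : M → A → ℝ) : ℝ :=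
  ∑ m, ∑ a, ∑ ω, f m a * u a ω * π ω m * p₀ ω

/-- Two kernels have the same support if they send the same set of messages with
positive (unconditional) probability. -/
def SameSupport {Ω M : Type*} [Fintype Ω] [Fintype M]
    (p₀ : Ω → ℝ) (π π' : Ω → M → ℝ) : Prop :=
  ∀ m, (0 < ∑ ω, π ω m * p₀ ω ↔ 0 < ∑ ω, π' ω m * p₀ ω)

/-- Example 1 receiver payoffs: `false` = Status Quo, `true` = New. -/
noncomputable def uRex1 : Bool → Bool → ℝ :=
  fun a ω => if a then (if ω then -(1/2) else 1) else 0

/-- Example 1 sender payoffs: 1 if Status Quo is played, 0 otherwise. -/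
noncomputable def uSex1 : Bool → Bool → ℝ := fun a _ => if a then 0 else 1

private lemma VS_formula {M : Type*} [Fintype M] (π : Bool → M → ℝ) (f : M → Bool → ℝ) :
    V (fun _ => (1/2 : ℝ)) uSex1 π f
      = ∑ m, f m false * (π false m + π true m) / 2 := by
  unfold V uSex1
  refine Finset.sum_congr rfl fun m _ => ?_
  simp [Fintype.sum_bool]
  ring

private lemma VR_formula {M : Type*} [Fintype M] (π : Bool → M → ℝ) (f : M → Bool → ℝ)
    (hπ : ∀ ω, ∑ m, π ω m = 1) (hf : ∀ m, ∑ a, f m a = 1) :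
    V (fun _ => (1/2 : ℝ)) uRex1 π f
      = 1/4 - ∑ m, f m false * (π false m / 2 - π true m / 4) := by
  have h1 : V (fun _ => (1/2 : ℝ)) uRex1 π f
      = ∑ m, ((π false m / 2 - π true m / 4)
          - f m false * (π false m / 2 - π true m / 4)) := by
    unfold V uRex1
    refine Finset.sum_congr rfl fun m _ => ?_
    have hm : f m true + f m false = 1 := by
      simpa [Fintype.sum_bool] using hf m
    have hft : f m true = 1 - f m false := by linarith
    simp [Fintype.sum_bool, hft]
    ring
  rw [h1, Finset.sum_sub_distrib]
  have h2 : ∑ m, (π false m / 2 - π true m / 4) = 1/4 := by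
    rw [Finset.sum_sub_distrib, ← Finset.sum_div, ← Finset.sum_div, hπ false, hπ true]
    norm_num
  rw [h2]

/-- In Example 1, the payoffs from Bayesian persuasion are NOT Pareto improvable:
for every optimal probabilistic information structure `π*` with sender-preferred
receiver-optimal plan `f*`, no same-support kernel `π'` makes the receiver weakly
and the sender strictly better off holding `f*` fixed. -/
theorem stmt_14 {M : Type*} [Fintype M]
    (p₀ : Bool → ℝ) (hp₀ : p₀ = fun _ => (1/2 : ℝ))
    (πstar : Bool → M → ℝ) (hπstar : IsKernel πstar)
    (fstar : M → Bool → ℝ) (hfstar : IsPlan fstar)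
    (hBR : ∀ f, IsPlan f → V p₀ uRex1 πstar f ≤ V p₀ uRex1 πstar fstar)
    (hSP : ∀ f, IsPlan f → (∀ f', IsPlan f' → V p₀ uRex1 πstar f' ≤ V p₀ uRex1 πstar f) →
      V p₀ uSex1 πstar f ≤ V p₀ uSex1 πstar fstar)
    (hOpt : ∀ (π : Bool → M → ℝ) (f : M → Bool → ℝ), IsKernel π → IsPlan f →
      (∀ f', IsPlan f' → V p₀ uRex1 π f' ≤ V p₀ uRex1 π f) →
      V p₀ uSex1 π f ≤ V p₀ uSex1 πstar fstar) :
    ¬ ∃ π' : Bool → M → ℝ, IsKernel π' ∧ SameSupport p₀ πstar π' ∧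
      V p₀ uRex1 πstar fstar ≤ V p₀ uRex1 π' fstar ∧
      V p₀ uSex1 πstar fstar < V p₀ uSex1 π' fstar := by
  classical
  subst hp₀
  rintro ⟨π', hK', hSupp, hR, hS⟩
  obtain ⟨hπ0, hπ1⟩ := hπstar
  obtain ⟨hf0, hf1⟩ := hfstar
  obtain ⟨hπ'0, hπ'1⟩ := hK'
  -- M is nonempty
  rcases isEmpty_or_nonempty M with hM | hM
  · have := hπ1 false
    simp at this
  obtain ⟨m₁⟩ := hM
  by_cases hsub : ∀ m : M, m = m₁
  · -- only one message: all kernels coincide, so no strict sender improvement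
    have hone : ∀ (π : Bool → M → ℝ), (∀ ω, ∑ m, π ω m = 1) → ∀ ω m, π ω m = 1 := by
      intro π hπ ω m
      have hu : (Finset.univ : Finset M) = {m} := by
        ext x
        simp only [Finset.mem_univ, Finset.mem_singleton, true_iff]
        exact (hsub x).trans (hsub m).symm
      have := hπ ω
      rwa [hu, Finset.sum_singleton] at this
    have hEq : π' = πstar := by
      funext ω m
      rw [hone π' hπ'1 ω m, hone πstar hπ1 ω m]
    rw [hEq] at hS
    exact lt_irrefl _ hS
  push_neg at hsub
  obtain ⟨m₂, hne⟩ := hsub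
  -- the two-message optimal persuasion kernel and plan
  set π2 : Bool → M → ℝ := fun ω m =>
    if ω then (if m = m₁ then 1 else 0)
    else (if m = m₁ then 1/2 else if m = m₂ then 1/2 else 0) with hπ2
  set f2 : M → Bool → ℝ := fun m a =>
    if m = m₁ then (if a then 0 else 1) else (if a then 1 else 0) with hf2
  have hK2 : IsKernel π2 := by
    constructor
    · intro ω m
      simp only [hπ2]
      cases ω <;> split_ifs <;> norm_num
    · intro ω
      cases ω
      · have hsplit : ∀ m : M,
            (if m = m₁ then (1/2:ℝ) else if m = m₂ then 1/2 else 0)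
              = (if m = m₁ then 1/2 else 0) + (if m = m₂ then 1/2 else 0) := by
          intro m
          rcases eq_or_ne m m₁ with rfl | h1
          · rw [if_pos rfl, if_pos rfl, if_neg (Ne.symm hne)]; ring
          · rw [if_neg h1, if_neg h1]; ring
        simp only [hπ2, Bool.cond_false]
        simp only [if_neg Bool.false_ne_true]
        rw [Finset.sum_congr rfl fun m _ => hsplit m, Finset.sum_add_distrib]
        simp
        norm_num
      · simp [hπ2]
  have hP2 : IsPlan f2 := by
    constructor
    · intro m a
      by_cases h : m = m₁ <;> cases a <;> simp [hf2, h]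
    · intro m
      by_cases h : m = m₁ <;> simp [hf2, h, Fintype.sum_bool]
  have hBR2 : ∀ f', IsPlan f' →
      V (fun _ => (1/2:ℝ)) uRex1 π2 f' ≤ V (fun _ => (1/2:ℝ)) uRex1 π2 f2 := by
    intro f' hf'
    have hform : ∀ (f : M → Bool → ℝ), (∀ m, ∑ a, f m a = 1) →
        V (fun _ => (1/2:ℝ)) uRex1 π2 f = 1/4 - f m₂ false / 4 := by
      intro f hf
      rw [VR_formula π2 f hK2.2 hf]
      congr 1
      have hpt : ∀ m : M, f m false * (π2 false m / 2 - π2 true m / 4)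
          = if m = m₂ then f m false / 4 else 0 := by
        intro m
        simp only [hπ2]
        rcases eq_or_ne m m₂ with rfl | h2
        · rw [if_pos rfl, if_neg hne, if_pos rfl]
          simp [if_neg hne]
          ring
        · rw [if_neg h2]
          rcases eq_or_ne m m₁ with rfl | h1
          · simp [h2]
            right
            norm_num
          · simp [h1, h2]
      rw [Finset.sum_congr rfl fun m _ => hpt m, Finset.sum_ite_eq']
      simp
    rw [hform f' hf'.2, hform f2 hP2.2]
    have h20 : f2 m₂ false = 0 := by
      simp only [hf2, if_neg hne]
      simp
    rw [h20]
    have := hf'.1 m₂ false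
    linarith
  have hVS2 : V (fun _ => (1/2:ℝ)) uSex1 π2 f2 = 3/4 := by
    rw [VS_formula]
    have hpt : ∀ m : M, f2 m false * (π2 false m + π2 true m) / 2
        = if m = m₁ then 3/4 else 0 := by
      intro m
      simp only [hf2, hπ2]
      rcases eq_or_ne m m₁ with rfl | h1
      · simp; norm_num
      · simp [h1]
    rw [Finset.sum_congr rfl fun m _ => hpt m, Finset.sum_ite_eq']
    simp
  -- sender's optimal value is at least 3/4
  have h34 : (3/4 : ℝ) ≤ V (fun _ => (1/2:ℝ)) uSex1 πstar fstar := by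
    have := hOpt π2 f2 hK2 hP2 hBR2
    rw [hVS2] at this
    exact this
  -- receiver can guarantee 1/4 by always playing New
  have hNewPlan : IsPlan (fun (_ : M) (a : Bool) => if a then (1:ℝ) else 0) := by
    constructor
    · intro m a; dsimp only; split_ifs <;> norm_num
    · intro m; simp [Fintype.sum_bool]
  have h14 : (1/4 : ℝ) ≤ V (fun _ => (1/2:ℝ)) uRex1 πstar fstar := by
    have h := hBR _ hNewPlan
    rw [VR_formula _ _ hπ1 hNewPlan.2] at h
    simpa using h
  -- the key linear identity
  have key : ∀ (π : Bool → M → ℝ),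
      (∑ m, fstar m false * (π false m + π true m) / 2)
        - (∑ m, fstar m false * (π false m / 2 - π true m / 4))
        = (3/4) * ∑ m, fstar m false * π true m := by
    intro π
    rw [← Finset.sum_sub_distrib, Finset.mul_sum]
    exact Finset.sum_congr rfl fun m _ => by ring
  have hRs := VR_formula πstar fstar hπ1 hf1
  have hRp := VR_formula π' fstar hπ'1 hf1
  have hSs := VS_formula πstar fstar
  have hSp := VS_formula π' fstar
  set A : ℝ := ∑ m, fstar m false * πstar true m with hA
  set A' : ℝ := ∑ m, fstar m false * π' true m with hA'
  have keyS := key πstar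
  have keyP := key π'
  rw [← hA] at keyS
  rw [← hA'] at keyP
  -- A ≥ 1
  have hA1 : (1:ℝ) ≤ A := by
    rw [hRs] at h14
    rw [hSs] at h34
    nlinarith [keyS]
  -- A' > A
  have hAA : A < A' := by
    rw [hRs, hRp] at hR
    rw [hSs, hSp] at hS
    nlinarith [keyS, keyP]
  -- A' ≤ 1
  have hA'1 : A' ≤ 1 := by
    have hle : ∀ m : M, fstar m false * π' true m ≤ π' true m := by
      intro m
      have h1 : fstar m true + fstar m false = 1 := by
        simpa [Fintype.sum_bool] using hf1 m
      have h2 := hf0 m true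
      have h3 := hπ'0 true m
      nlinarith
    calc A' ≤ ∑ m, π' true m := Finset.sum_le_sum fun m _ => hle m
      _ = 1 := hπ'1 true
  linarith
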